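/- arXiv:2212.13872 — 4 statements merged into one kernel-verified Lean document; each statement's English description precedes it below -/
import Mathlib

section
/- Let θ ∈ (0, 1/4) and τ ∈ (0, 1/4). Define φ_τ(z) = (1+z)^{1/4+θ} / (1 + (τ²/4) z)^{1/2} for z in the open right half-plane (using principal branches). Then sup over z with Re z ≥ 0 of |φ_τ(z)| is bounded by C · τ^{-1/2 - 2θ} for a constant C depending only on θ (and in fact one may take C = 16^{1/8+θ/2} (255/512)^{-1/4} (1/4 - θ)^{1/8 - θ/2}, with the bound max{1, Cτ^{-1/2-2θ}}). -/
/-!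
With `t = τ²/4 ≤ 1` and `Re z ≥ 0` one has `1 ≤ ‖1 + t z‖` and `t ‖1 + z‖ ≤ ‖1 + t z‖`, so for
`p = 1/4 + θ ≤ 1/2`
`‖1 + z‖^p / ‖1 + t z‖^(1/2) ≤ t^(-p) ‖1 + t z‖^(p - 1/2) ≤ t^(-p) = 16^(1/8 + θ/2) τ^(-1/2 - 2θ)`.
The remaining factor `(255/512)^(-1/4) s^(s/2)`, `s = 1/4 - θ`, is at least `1` because
`s ↦ s log s` decreases on `(0, 1/e]`, so `s^(s/2) ≥ (1/4)^(1/8) = (1/2)^(1/4)`.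
-/

open Real

lemma Real.mul_log_antitoneOn : AntitoneOn (fun x : ℝ ↦ x * log x) (Set.Ioc 0 (exp (-1))) := by
  intro s ⟨hs0, _⟩ c ⟨hc0, hce⟩ hsc
  -- the tangent line at `c` lies below the convex function and has slope `log c + 1 ≤ 0`
  have htangent : c * log c + (s - c) * (log c + 1) ≤ s * log s := by
    have h := log_le_sub_one_of_pos (div_pos hc0 hs0)
    rw [log_div hc0.ne' hs0.ne', div_sub_one hs0.ne', le_div_iff₀ hs0] at h
    nlinarith
  have hslope : log c + 1 ≤ 0 := by
    linarith [(log_le_iff_le_exp hc0).mpr hce]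
  nlinarith

lemma one_le_rpow_neg_mul_rpow_half_self {s : ℝ} (hs0 : 0 < s) (hs : s ≤ 1/4) :
    1 ≤ (255/512 : ℝ) ^ (-(1/4) : ℝ) * s ^ (s / 2) := by
  have hquarter : (1/4 : ℝ) ≤ exp (-1) := by
    rw [exp_neg, ← one_div]
    exact one_div_le_one_div_of_le (exp_pos 1) (by linarith [exp_one_lt_d9])
  have hmin : (1/4 : ℝ) * log (1/4) ≤ s * log s :=
    mul_log_antitoneOn ⟨hs0, hs.trans hquarter⟩ ⟨by norm_num, hquarter⟩ hs
  have hlog : log (1/4 : ℝ) = 2 * log (1/2) := by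
    rw [show (1/4 : ℝ) = (1/2) ^ 2 by norm_num, log_pow]
    push_cast
    ring
  have hhalf : (1/2 : ℝ) ^ (1/4 : ℝ) ≤ s ^ (s / 2) := by
    rw [rpow_def_of_pos (by norm_num), rpow_def_of_pos hs0, exp_le_exp]
    nlinarith
  calc (1 : ℝ) = (255/512 : ℝ) ^ (-(1/4) : ℝ) * (255/512 : ℝ) ^ (1/4 : ℝ) := by
        rw [← rpow_add (by norm_num)]; norm_num
    _ ≤ (255/512 : ℝ) ^ (-(1/4) : ℝ) * s ^ (s / 2) := by
        gcongr
        exact (rpow_le_rpow (by norm_num) (by norm_num) (by norm_num)).trans hhalf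

lemma Real.sq_div_four_rpow_neg {τ : ℝ} (hτ : 0 ≤ τ) (p : ℝ) :
    (τ ^ 2 / 4) ^ (-p) = (16 : ℝ) ^ (p / 2) * τ ^ (-(2 * p)) := by
  rw [div_rpow (by positivity) (by norm_num), ← rpow_natCast_mul hτ, rpow_neg (by norm_num),
    show (16 : ℝ) = 4 ^ (2 : ℕ) by norm_num, ← rpow_natCast_mul (by norm_num)]
  push_cast
  rw [show 2 * (p / 2) = p by ring, show (2 : ℝ) * -p = -(2 * p) by ring, div_inv_eq_mul, mul_comm]

lemma Real.rpow_div_rpow_le_rpow_neg {a b t p q : ℝ} (ha : 0 ≤ a) (ht : 0 < t) (hab : t * a ≤ b)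
    (hb : 1 ≤ b) (hp : 0 ≤ p) (hpq : p ≤ q) : a ^ p / b ^ q ≤ t ^ (-p) := by
  have hb0 : 0 < b := one_pos.trans_le hb
  calc a ^ p / b ^ q ≤ (b / t) ^ p / b ^ q := by
        gcongr
        rwa [le_div_iff₀' ht]
    _ = t ^ (-p) * b ^ (p - q) := by
        rw [div_rpow hb0.le ht.le, rpow_sub hb0, rpow_neg ht.le]; ring
    _ ≤ t ^ (-p) := mul_le_of_le_one_right (by positivity)
        (rpow_le_one_of_one_le_of_nonpos hb (by linarith))

lemma Complex.one_le_norm_one_add {z : ℂ} (hz : 0 ≤ z.re) : 1 ≤ ‖1 + z‖ :=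
  calc (1 : ℝ) ≤ (1 + z).re := by simp [hz]
    _ ≤ ‖1 + z‖ := re_le_norm _

lemma Complex.mul_norm_one_add_le_norm_one_add_mul {t : ℝ} (ht0 : 0 ≤ t) (ht1 : t ≤ 1) {z : ℂ}
    (hz : 0 ≤ z.re) : t * ‖1 + z‖ ≤ ‖1 + t * z‖ := by
  -- `‖1 + t z‖² - t² ‖1 + z‖² = (1 - t²) + 2 t (1 - t) Re z`
  have hsq : (t * ‖1 + z‖) ^ 2 ≤ ‖1 + t * z‖ ^ 2 := by
    simp only [mul_pow, Complex.sq_norm, normSq_apply, add_re, add_im, one_re, one_im, mul_re,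
      mul_im, ofReal_re, ofReal_im]
    nlinarith [mul_nonneg (mul_nonneg ht0 (sub_nonneg.2 ht1)) hz]
  exact (pow_le_pow_iff_left₀ (by positivity) (norm_nonneg _) two_ne_zero).1 hsq

lemma Complex.norm_one_add_cpow_div_le {t p q : ℝ} (ht0 : 0 < t) (ht1 : t ≤ 1) (hp : 0 ≤ p)
    (hpq : p ≤ q) {z : ℂ} (hz : 0 ≤ z.re) :
    ‖(1 + z) ^ (p : ℂ) / (1 + (t : ℂ) * z) ^ (q : ℂ)‖ ≤ t ^ (-p) := by
  rw [norm_div, norm_cpow_real, norm_cpow_real]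
  refine rpow_div_rpow_le_rpow_neg (norm_nonneg _) ht0
    (mul_norm_one_add_le_norm_one_add_mul ht0.le ht1 hz) ?_ hp hpq
  exact one_le_norm_one_add (by simpa using mul_nonneg ht0.le hz)

/-- For `θ ∈ (0,1/4)`, `τ ∈ (0,1/4)`, the function
`φ_τ(z) = (1+z)^{1/4+θ} / (1+(τ²/4)z)^{1/2}` (principal branches) satisfies
`|φ_τ(z)| ≤ max{1, C τ^{-1/2-2θ}}` on the closed right half-plane, with
`C = 16^{1/8+θ/2} (255/512)^{-1/4} (1/4-θ)^{1/8-θ/2}`. -/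
theorem stmt_2 (θ τ : ℝ) (hθ : θ ∈ Set.Ioo (0 : ℝ) (1/4)) (hτ : τ ∈ Set.Ioo (0 : ℝ) (1/4)) :
    ∀ z : ℂ, 0 ≤ z.re →
      ‖(1 + z) ^ (((1/4 + θ : ℝ)) : ℂ) /
          (1 + ((τ ^ 2 / 4 : ℝ) : ℂ) * z) ^ (((1/2 : ℝ)) : ℂ)‖
        ≤ max 1 ((16 : ℝ) ^ (1/8 + θ/2 : ℝ) * (255/512 : ℝ) ^ (-(1/4) : ℝ) *
            (1/4 - θ) ^ (1/8 - θ/2 : ℝ) * τ ^ (-(1/2) - 2*θ : ℝ)) := by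
  obtain ⟨hθ0, hθ1⟩ := hθ
  obtain ⟨hτ0, hτ1⟩ := hτ
  intro z hz
  have hφ := Complex.norm_one_add_cpow_div_le (t := τ ^ 2 / 4) (p := 1/4 + θ) (q := 1/2)
    (by positivity) (by nlinarith) (by linarith) (by linarith) hz
  rw [sq_div_four_rpow_neg hτ0.le, show (1/4 + θ) / 2 = 1/8 + θ/2 by ring,
    show -(2 * (1/4 + θ)) = -(1/2) - 2*θ by ring] at hφ
  have hC := one_le_rpow_neg_mul_rpow_half_self (s := 1/4 - θ) (by linarith) (by linarith)
  rw [show (1/4 - θ) / 2 = 1/8 - θ/2 by ring] at hC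
  refine le_max_of_le_right (hφ.trans ?_)
  calc (16 : ℝ) ^ (1/8 + θ/2 : ℝ) * τ ^ (-(1/2) - 2*θ : ℝ)
      = (16 : ℝ) ^ (1/8 + θ/2 : ℝ) * 1 * τ ^ (-(1/2) - 2*θ : ℝ) := by ring
    _ ≤ _ := by rw [mul_assoc _ ((255/512 : ℝ) ^ _)]; gcongr
end

section
/- For θ ∈ (0, 1/4), τ ∈ (0,1/4), and real x, the function f(x) = (1+x²)^{1/8+θ/2} / (1 + (τ⁴/16) x²)^{1/4} attains its maximum over ℝ either at x = 0 (value 1) or at x² = -1/(32(1/64 - θ/16)) + (1/4+θ)/((1/64 - θ/16) τ⁴), and at those points f(x) ≤ (16^{1/8+θ/2} / (255/512)^{1/4}) (1/4 - θ)^{1/8 - θ/2} τ^{-1/2 - 2θ}. -/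
lemma bern_aux {y s : ℝ} (hy : 0 ≤ y) (hs0 : 0 ≤ s) (hs1 : s ≤ 1) :
    y ^ s ≤ s * y + (1 - s) := by
  have h := Real.geom_mean_le_arith_mean2_weighted (w₁ := s) (w₂ := 1 - s) (p₁ := y) (p₂ := 1)
    hs0 (by linarith) hy zero_le_one (by ring)
  simpa using h

lemma ha3_aux (θ : ℝ) (hθ0 : 0 < θ) (hu0 : (0:ℝ) < 1/4 - θ) :
    (1/2:ℝ) ≤ (1/4 - θ)^(1/8 - θ/2 : ℝ) := by
  rw [Real.rpow_def_of_pos hu0]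
  have hlog : -((1/4-θ)⁻¹ - 1) ≤ Real.log (1/4-θ) := by
    have h := Real.log_le_sub_one_of_pos (inv_pos.2 hu0)
    rw [Real.log_inv] at h
    linarith
  have hmul := mul_le_mul_of_nonneg_right hlog (by linarith : (0:ℝ) ≤ 1/8 - θ/2)
  have hcalc : ((1/4-θ:ℝ)⁻¹ - 1) * (1/8 - θ/2) = (1 - (1/4-θ))/2 := by
    have hmc : (1/4-θ:ℝ)⁻¹ * (1/4-θ) = 1 := inv_mul_cancel₀ hu0.ne'
    linear_combination (1/2 : ℝ) * hmc
  have hkey : -(1/2:ℝ) ≤ Real.log (1/4-θ) * (1/8 - θ/2) := by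
    nlinarith [hmul, hcalc]
  have hexp := Real.add_one_le_exp (Real.log (1/4-θ) * (1/8 - θ/2))
  linarith

lemma ha4_aux (θ τ : ℝ) (hθ0 : 0 < θ) (hτ0 : 0 < τ) (hτ1 : τ < 1/4) :
    (2:ℝ) ≤ τ^(-(1/2) - 2*θ : ℝ) := by
  have h14 : ((1/4:ℝ))^((1/2:ℝ)) = 1/2 := by
    rw [show (1/4:ℝ) = (1/2)^(2:ℕ) by norm_num, ← Real.rpow_natCast ((1:ℝ)/2) 2,
      ← Real.rpow_mul (by norm_num)]
    norm_num
  have h1 : τ^((1/2 + 2*θ : ℝ)) ≤ (1/4:ℝ)^((1/2 + 2*θ:ℝ)) :=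
    Real.rpow_le_rpow hτ0.le hτ1.le (by linarith)
  have h2 : ((1/4:ℝ))^((1/2 + 2*θ:ℝ)) ≤ (1/4:ℝ)^((1/2:ℝ)) :=
    Real.rpow_le_rpow_of_exponent_ge (by norm_num) (by norm_num) (by linarith)
  have hpos : (0:ℝ) < τ^((1/2 + 2*θ:ℝ)) := Real.rpow_pos_of_pos hτ0 _
  have hle : τ^((1/2 + 2*θ:ℝ)) ≤ 1/2 := by rw [h14] at h2; linarith
  have hrw : τ^(-(1/2) - 2*θ : ℝ) = (τ^((1/2 + 2*θ:ℝ)))⁻¹ := by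
    rw [← Real.rpow_neg hτ0.le]; congr 1; ring
  rw [hrw]
  nlinarith [mul_inv_cancel₀ (ne_of_gt hpos), inv_pos.2 hpos,
    mul_nonneg (sub_nonneg.2 hle) (inv_nonneg.2 hpos.le)]

lemma hcore_aux (p c : ℝ) (hp0 : 0 < p) (hp1 : p < 1) (hcnn : 0 ≤ c) (h1c0 : (0:ℝ) < 1 - c)
    (h1c : (4095/4096:ℝ) ≤ 1 - c) :
    p^p * (1-c)^(p-1:ℝ) * (2:ℝ)^(1-p:ℝ) ≤ 512/255 := by
  have b1 : p^p ≤ 1 := Real.rpow_le_one hp0.le hp1.le hp0.le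
  have b2 : (1-c:ℝ)^(p-1:ℝ) ≤ (1-c)^(-1:ℝ) :=
    Real.rpow_le_rpow_of_exponent_ge h1c0 (by linarith) (by linarith)
  have b2' : (1-c:ℝ)^(-1:ℝ) = (1-c)⁻¹ := Real.rpow_neg_one _
  have b2'' : (1-c:ℝ)⁻¹ ≤ 4096/4095 := by
    nlinarith [mul_inv_cancel₀ h1c0.ne', inv_pos.2 h1c0,
      mul_nonneg (sub_nonneg.2 h1c) (inv_nonneg.2 h1c0.le)]
  have b2f : (1-c:ℝ)^(p-1:ℝ) ≤ 4096/4095 := by rw [b2'] at b2; linarith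
  have b3 : (2:ℝ)^(1-p:ℝ) ≤ 2 := by
    have h := Real.rpow_le_rpow_of_exponent_le (by norm_num : (1:ℝ) ≤ 2)
      (by linarith : (1-p:ℝ) ≤ 1)
    rwa [Real.rpow_one] at h
  have pos2 : (0:ℝ) ≤ (1-c)^(p-1:ℝ) := Real.rpow_nonneg h1c0.le _
  have pos3 : (0:ℝ) ≤ (2:ℝ)^(1-p:ℝ) := Real.rpow_nonneg (by norm_num) _
  calc p^p * (1-c)^(p-1:ℝ) * (2:ℝ)^(1-p:ℝ) ≤ 1 * (4096/4095) * 2 := by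
        apply mul_le_mul (mul_le_mul b1 b2f pos2 zero_le_one) b3 pos3 (by norm_num)
    _ ≤ 512/255 := by norm_num

lemma hMeq_aux (X16 Xp Xc T Q U W pp cc : ℝ) (hT : T ≠ 0) (hQ : Q ≠ 0)
    (hc : (1-cc) ≠ 0) (hp : (1-pp) ≠ 0) (hW : W ≠ 0)
    (ht2 : W * U = (1-pp) / Q) :
    (X16*Xp*Xc/(T*Q)) / ((1-cc)/(1-pp)) = (X16 * U * T⁻¹) * (Xp * (Xc/(1-cc)) * W) := by
  have hU : U = (1-pp)/(Q*W) := by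
    field_simp at ht2 ⊢
    linear_combination ht2
  rw [hU]
  field_simp

set_option maxHeartbeats 2000000 in
/-- For `θ ∈ (0,1/4)`, `τ ∈ (0,1/4)`, the function
`f(x) = (1+x²)^{1/8+θ/2} / (1+(τ⁴/16)x²)^{1/4}` attains its maximum over `ℝ`
either at `x = 0` (value `1`) or at `x² = -1/(32(1/64-θ/16)) + (1/4+θ)/((1/64-θ/16)τ⁴)`,
and at those points `f(x) ≤ (16^{1/8+θ/2}/(255/512)^{1/4}) (1/4-θ)^{1/8-θ/2} τ^{-1/2-2θ}`. -/
theorem stmt_3 (θ τ : ℝ) (hθ : θ ∈ Set.Ioo (0 : ℝ) (1/4)) (hτ : τ ∈ Set.Ioo (0 : ℝ) (1/4))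
    (f : ℝ → ℝ)
    (hf : f = fun x => (1 + x ^ 2) ^ (1/8 + θ/2 : ℝ) / (1 + τ ^ 4 / 16 * x ^ 2) ^ (1/4 : ℝ))
    (x0 : ℝ)
    (hx0 : x0 ^ 2 = -(1 / (32 * (1/64 - θ/16))) + (1/4 + θ) / ((1/64 - θ/16) * τ ^ 4)) :
    (∀ x : ℝ, f x ≤ max (f 0) (f x0)) ∧ f 0 = 1 ∧
      f 0 ≤ (16 : ℝ) ^ (1/8 + θ/2 : ℝ) / (255/512 : ℝ) ^ (1/4 : ℝ) *
          (1/4 - θ) ^ (1/8 - θ/2 : ℝ) * τ ^ (-(1/2) - 2*θ : ℝ) ∧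
      f x0 ≤ (16 : ℝ) ^ (1/8 + θ/2 : ℝ) / (255/512 : ℝ) ^ (1/4 : ℝ) *
          (1/4 - θ) ^ (1/8 - θ/2 : ℝ) * τ ^ (-(1/2) - 2*θ : ℝ) := by
  obtain ⟨hθ0, hθ1⟩ := hθ
  obtain ⟨hτ0, hτ1⟩ := hτ
  set p : ℝ := 1/2 + 2*θ with hp
  set c : ℝ := τ^4/16 with hc
  have hp0 : 0 < p := by rw [hp]; linarith
  have hp1 : p < 1 := by rw [hp]; linarith
  have h1p0 : (0:ℝ) < 1 - p := by linarith
  have hτ40 : (0:ℝ) < τ^4 := by positivity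
  have hτ4 : τ^4 ≤ 1/256 := by
    have := pow_le_pow_left₀ hτ0.le hτ1.le 4
    norm_num at this; linarith
  have hc0 : 0 < c := by rw [hc]; positivity
  have hc1 : c ≤ 1/4096 := by rw [hc]; linarith
  have h1c0 : (0:ℝ) < 1 - c := by linarith
  have h1c : (4095/4096 : ℝ) ≤ 1 - c := by linarith
  have hτne : τ ≠ 0 := ne_of_gt hτ0
  have hkne : (1/64 - θ/16 : ℝ) ≠ 0 := by intro h; nlinarith
  have hu0 : (0:ℝ) < 1/4 - θ := by linarith
  -- closed forms at x0
  have hd2 : (16 - 64*θ : ℝ) ≠ 0 := ne_of_gt (by linarith)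
  have hx0' : x0^2 * ((1 - 4*θ) * τ^4) = 16 + 64*θ - 2*τ^4 := by
    rw [hx0]; field_simp [hkne, hd2]; ring
  have hA2 : (1 + x0^2 : ℝ) = 16*p*(1-c)/(τ^4*(1-p)) := by
    rw [hp, hc, eq_div_iff (ne_of_gt (mul_pos hτ40 (by linarith : (0:ℝ) < 1 - (1/2 + 2*θ))))]
    linear_combination hx0' / 2
  have hA0 : (0:ℝ) < 1 + x0^2 := by rw [hA2]; positivity
  have hB : (1 + c * x0^2 : ℝ) = (1-c)/(1-p) := by
    rw [hp, hc, eq_div_iff (by linarith : (1:ℝ) - (1/2 + 2*θ) ≠ 0)]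
    linear_combination hx0' / 32
  have hB0 : (0:ℝ) < 1 + c * x0^2 := by rw [hB]; positivity
  -- f in terms of p, c
  have hfval : ∀ x : ℝ, f x = ((1 + x^2)^p / (1 + c*x^2))^(1/4 : ℝ) := by
    intro x
    have hx2 : (0:ℝ) < 1 + x^2 := by positivity
    have hcx : (0:ℝ) < 1 + c*x^2 := by positivity
    have hnum : ((1 + x^2 : ℝ))^(1/8 + θ/2 : ℝ) = ((1 + x^2)^p)^(1/4 : ℝ) := by
      rw [← Real.rpow_mul hx2.le]
      congr 1; rw [hp]; ring
    rw [hf]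
    simp only
    rw [Real.div_rpow (Real.rpow_nonneg hx2.le p) hcx.le, hnum]
  -- pointwise bound
  have key : ∀ x : ℝ, (1 + x^2)^p / (1 + c*x^2) ≤ (1 + x0^2)^p / (1 + c*x0^2) := by
    intro x
    have hx2 : (0:ℝ) < 1 + x^2 := by positivity
    have hcx : (0:ℝ) < 1 + c*x^2 := by positivity
    have hb := bern_aux (y := (1+x^2)/(1+x0^2)) (by positivity) hp0.le hp1.le
    have h1 : (1 + x^2 : ℝ)^p ≤ (1 + x0^2)^p * (p * ((1+x^2)/(1+x0^2)) + (1-p)) := by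
      calc (1 + x^2 : ℝ)^p = ((1+x0^2) * ((1+x^2)/(1+x0^2)))^p := by
            rw [mul_div_cancel₀ _ (ne_of_gt hA0)]
        _ = (1+x0^2)^p * ((1+x^2)/(1+x0^2))^p :=
            Real.mul_rpow hA0.le (by positivity)
        _ ≤ (1+x0^2)^p * (p * ((1+x^2)/(1+x0^2)) + (1-p)) :=
            mul_le_mul_of_nonneg_left hb (Real.rpow_nonneg hA0.le p)
    have h2 : p * ((1+x^2)/(1+x0^2)) + (1-p) = (1 + c*x^2)/(1 + c*x0^2) := by
      rw [hB, hA2]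
      field_simp [hτne, h1p0.ne', h1c0.ne', hp0.ne']
      ring
    rw [div_le_div_iff₀ hcx hB0]
    calc (1 + x^2 : ℝ)^p * (1 + c*x0^2)
        ≤ ((1+x0^2)^p * ((1 + c*x^2)/(1 + c*x0^2))) * (1 + c*x0^2) := by
          apply mul_le_mul_of_nonneg_right _ hB0.le
          rw [← h2]; exact h1
      _ = (1+x0^2)^p * (1 + c*x^2) := by
          rw [mul_assoc, div_mul_cancel₀ _ (ne_of_gt hB0)]
  have hfx : ∀ x : ℝ, f x ≤ f x0 := by
    intro x
    rw [hfval x, hfval x0]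
    exact Real.rpow_le_rpow (by positivity) (key x) (by norm_num)
  clear_value p c
  have hf0 : f 0 = 1 := by rw [hf]; simp
  set R : ℝ := (16:ℝ)^(1/8 + θ/2 : ℝ) / (255/512:ℝ)^(1/4:ℝ) * (1/4 - θ)^(1/8 - θ/2 : ℝ)
      * τ^(-(1/2) - 2*θ : ℝ) with hR
  clear_value R
  have ha1 : (1:ℝ) ≤ (16:ℝ)^(1/8 + θ/2 : ℝ) := Real.one_le_rpow (by norm_num) (by linarith)
  have ha2 : ((255/512:ℝ))^(1/4:ℝ) ≤ 1 := Real.rpow_le_one (by norm_num) (by norm_num) (by norm_num)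
  have ha2' : (0:ℝ) < (255/512:ℝ)^(1/4:ℝ) := Real.rpow_pos_of_pos (by norm_num) _
  have ha3 : (1/2:ℝ) ≤ (1/4 - θ)^(1/8 - θ/2 : ℝ) := ha3_aux θ hθ0 hu0
  have ha4 : (2:ℝ) ≤ τ^(-(1/2) - 2*θ : ℝ) := ha4_aux θ τ hθ0 hτ0 hτ1
  have hR0 : (0:ℝ) < R := by
    rw [hR]
    exact mul_pos (mul_pos (div_pos (Real.rpow_pos_of_pos (by norm_num) _) ha2')
      (Real.rpow_pos_of_pos hu0 _)) (Real.rpow_pos_of_pos hτ0 _)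
  have hR1 : (1:ℝ) ≤ R := by
    rw [hR]
    have hdiv : (1:ℝ) ≤ (16:ℝ)^(1/8+θ/2:ℝ) / (255/512:ℝ)^(1/4:ℝ) := by
      rw [le_div_iff₀ ha2']; linarith
    calc (1:ℝ) = 1 * (1/2) * 2 := by norm_num
      _ ≤ (16:ℝ)^(1/8+θ/2:ℝ)/(255/512:ℝ)^(1/4:ℝ) * ((1/4-θ)^(1/8-θ/2:ℝ))
          * (τ^(-(1/2)-2*θ:ℝ)) := by
          apply mul_le_mul _ ha4 (by norm_num) _
          · exact mul_le_mul hdiv ha3 (by norm_num) (by linarith)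
          · have h3 : (0:ℝ) ≤ (1/4-θ)^(1/8-θ/2:ℝ) := Real.rpow_nonneg hu0.le _
            have h4 : (0:ℝ) ≤ (16:ℝ)^(1/8+θ/2:ℝ)/(255/512:ℝ)^(1/4:ℝ) := by positivity
            exact mul_nonneg h4 h3
  -- value at x0
  have hτ4p : ((τ:ℝ)^4)^p = τ^(4*p:ℝ) := by
    rw [← Real.rpow_natCast τ 4, ← Real.rpow_mul hτ0.le]
    congr 1
  have hT0 : (0:ℝ) < τ^(4*p:ℝ) := Real.rpow_pos_of_pos hτ0 _
  have hQ0 : (0:ℝ) < (1-p:ℝ)^p := Real.rpow_pos_of_pos h1p0 _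
  have hAp : ((1 + x0^2:ℝ))^p = ((16:ℝ)^p * p^p * (1-c)^p) / (τ^(4*p:ℝ) * (1-p)^p) := by
    rw [hA2, Real.div_rpow (mul_nonneg (mul_nonneg (by norm_num) hp0.le) h1c0.le)
      (mul_nonneg (by positivity) h1p0.le),
      Real.mul_rpow (mul_nonneg (by norm_num) hp0.le) h1c0.le,
      Real.mul_rpow (by norm_num) hp0.le,
      Real.mul_rpow (by positivity) h1p0.le, hτ4p]
  have ht2 : (2:ℝ)^(1-p:ℝ) * (1/4-θ)^(1-p:ℝ) = (1-p) / (1-p)^p := by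
    rw [← Real.mul_rpow (by norm_num) hu0.le,
      show (2*(1/4-θ):ℝ) = 1-p by rw [hp]; ring]
    have h := Real.rpow_sub h1p0 1 p
    rw [Real.rpow_one] at h
    exact h
  have ht3 : (1-c:ℝ)^(p-1:ℝ) = (1-c)^p / (1-c) := by
    have h := Real.rpow_sub h1c0 p 1
    rw [Real.rpow_one] at h
    exact h
  have ht4 : τ^(-(4*p):ℝ) = (τ^(4*p:ℝ))⁻¹ := Real.rpow_neg hτ0.le _
  have hMeq : (1 + x0^2)^p / (1 + c*x0^2)
      = ((16:ℝ)^p * (1/4-θ)^(1-p:ℝ) * τ^(-(4*p):ℝ))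
        * (p^p * (1-c)^(p-1:ℝ) * (2:ℝ)^(1-p:ℝ)) := by
    rw [hB, hAp, ht3, ht4]
    exact hMeq_aux _ _ _ _ _ _ _ p c hT0.ne' hQ0.ne' h1c0.ne' h1p0.ne'
      (Real.rpow_pos_of_pos (by norm_num) _).ne' ht2
  have hcore : p^p * (1-c)^(p-1:ℝ) * (2:ℝ)^(1-p:ℝ) ≤ 512/255 :=
    hcore_aux p c hp0 hp1 hc0.le h1c0 h1c
  have hposF : (0:ℝ) ≤ (16:ℝ)^p * (1/4-θ)^(1-p:ℝ) * τ^(-(4*p):ℝ) :=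
    mul_nonneg (mul_nonneg (Real.rpow_nonneg (by norm_num) _) (Real.rpow_nonneg hu0.le _))
      (Real.rpow_nonneg hτ0.le _)
  have hRexp : R^(4:ℝ) = ((16:ℝ)^p * (1/4-θ)^(1-p:ℝ) * τ^(-(4*p):ℝ)) * (512/255) := by
    rw [hR]
    rw [Real.mul_rpow (mul_nonneg (by positivity) (Real.rpow_nonneg hu0.le _)) (Real.rpow_nonneg hτ0.le _),
      Real.mul_rpow (by positivity) (Real.rpow_nonneg hu0.le _),
      Real.div_rpow (Real.rpow_nonneg (by norm_num) _) (Real.rpow_nonneg (by norm_num) _)]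
    rw [← Real.rpow_mul (by norm_num : (0:ℝ) ≤ 16),
      ← Real.rpow_mul (by norm_num : (0:ℝ) ≤ 255/512),
      ← Real.rpow_mul hu0.le, ← Real.rpow_mul hτ0.le]
    rw [show ((1/8 + θ/2)*4 : ℝ) = p by rw [hp]; ring,
      show ((1/8 - θ/2)*4 : ℝ) = 1-p by rw [hp]; ring,
      show ((-(1/2) - 2*θ)*4 : ℝ) = -(4*p) by rw [hp]; ring,
      show ((1/4)*4 : ℝ) = 1 by norm_num, Real.rpow_one]
    ring
  have hfx0R : f x0 ≤ R := by
    rw [hfval x0]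
    have hstep : (1 + x0^2)^p / (1 + c*x0^2) ≤ R^(4:ℝ) := by
      rw [hMeq, hRexp]
      exact mul_le_mul_of_nonneg_left hcore hposF
    have hMnn : (0:ℝ) ≤ (1 + x0^2)^p / (1 + c*x0^2) :=
      div_nonneg (Real.rpow_nonneg hA0.le _) hB0.le
    calc ((1 + x0^2)^p / (1 + c*x0^2))^(1/4:ℝ) ≤ (R^(4:ℝ))^(1/4:ℝ) :=
          Real.rpow_le_rpow hMnn hstep (by norm_num)
      _ = R := by
          rw [← Real.rpow_mul hR0.le]
          norm_num
  exact ⟨fun x => le_max_of_le_right (hfx x), hf0, by rw [hf0]; exact hR1, hfx0R⟩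
end

section
/- Consider the eigenvalue problem (ψ^{(i)})'' = -κ² ψ^{(i)} on the four quarter-intervals I_1 = (0, π/2), I_2 = (π/2, π), I_3 = (π, 3π/2), I_4 = (3π/2, 2π) with transmission conditions ε₁ψ^{(1)}(0) = ε₄ψ^{(4)}(2π), (ψ^{(1)})'(0) = (ψ^{(4)})'(2π), ψ^{(1)}(π/2) = ψ^{(2)}(π/2), (ψ^{(1)})'(π/2) = (ψ^{(2)})'(π/2), ψ^{(2)}(π) = ψ^{(3)}(π), (ψ^{(2)})'(π) = (ψ^{(3)})'(π), ψ^{(3)}(3π/2) = ψ^{(4)}(3π/2), ε₁(ψ^{(3)})'(3π/2) = ε₄(ψ^{(4)})'(3π/2), where ε₁ = ε₂ = ε₃ ≠ ε₄ are positive constants. Then all eigenvalues κ² are strictly positive. -/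
/-!
Multiply the equation on each piece by `ψ` and integrate by parts: `∫ ψ'² = [ψ' ψ] + κ² ∫ ψ²`.
Weighted by `ε₁, ε₁, ε₁, ε₄`, the boundary terms cancel by the transmission conditions, so
`κ² ≤ 0` forces `ψ' = 0` on every piece. Then `ψ` is one constant `c` across the three inner
interfaces, and the condition at `0 ~ 2π` reads `ε₁ c = ε₄ c`, so `c = 0` because `ε₁ ≠ ε₄`.
-/

open Real Set intervalIntegral

noncomputable def boundaryFlux (ψ : ℝ → ℝ) (a b : ℝ) : ℝ :=
  deriv ψ b * ψ b - deriv ψ a * ψ a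

variable {ψ f : ℝ → ℝ} {a b κsq : ℝ}

theorem integral_deriv_sq_of_deriv_deriv_eq (hψ : ContDiff ℝ 2 ψ) (hab : a ≤ b)
    (hode : ∀ x ∈ Icc a b, deriv (deriv ψ) x = -κsq * ψ x) :
    ∫ x in a..b, deriv ψ x ^ 2 = boundaryFlux ψ a b + κsq * ∫ x in a..b, ψ x ^ 2 := by
  have hψ' : ContDiff ℝ 1 (deriv ψ) := (contDiff_succ_iff_deriv.mp hψ).2.2
  have parts : ∫ x in a..b, (deriv (deriv ψ) x * ψ x + deriv ψ x * deriv ψ x)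
      = boundaryFlux ψ a b :=
    integral_eq_sub_of_hasDerivAt
      (fun x _ => ((hψ'.differentiable one_ne_zero x).hasDerivAt).mul
        ((hψ.differentiable (by norm_num) x).hasDerivAt))
      ((((hψ'.continuous_deriv le_rfl).mul hψ.continuous).add
        (hψ'.continuous.mul hψ'.continuous)).intervalIntegrable a b)
  have integrand : ∫ x in a..b, (deriv (deriv ψ) x * ψ x + deriv ψ x * deriv ψ x)
      = ∫ x in a..b, (deriv ψ x ^ 2 - κsq * ψ x ^ 2) := by
    refine integral_congr fun x hx => ?_
    rw [uIcc_of_le hab] at hx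
    simp only [hode x hx]
    ring
  rw [integrand, integral_sub, integral_const_mul] at parts
  · linarith
  all_goals exact Continuous.intervalIntegrable (by fun_prop) a b

theorem integral_deriv_sq_le_boundaryFlux (hψ : ContDiff ℝ 2 ψ) (hab : a ≤ b) (hκ : κsq ≤ 0)
    (hode : ∀ x ∈ Icc a b, deriv (deriv ψ) x = -κsq * ψ x) :
    ∫ x in a..b, deriv ψ x ^ 2 ≤ boundaryFlux ψ a b := by
  rw [integral_deriv_sq_of_deriv_deriv_eq hψ hab hode]
  have : 0 ≤ ∫ x in a..b, ψ x ^ 2 := integral_nonneg hab fun _ _ => sq_nonneg _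
  nlinarith

theorem eqOn_zero_of_integral_sq_nonpos (hf : ContinuousOn f (Icc a b)) (hab : a < b)
    (h : ∫ x in a..b, f x ^ 2 ≤ 0) : ∀ x ∈ Icc a b, f x = 0 := by
  intro c hc
  by_contra hfc
  exact h.not_gt <| integral_pos hab (hf.pow 2) (fun _ _ => sq_nonneg _) ⟨c, hc, by positivity⟩

theorem eq_left_of_integral_deriv_sq_nonpos (hψ : ContDiff ℝ 1 ψ) (hab : a < b)
    (h : ∫ x in a..b, deriv ψ x ^ 2 ≤ 0) : ∀ x ∈ Icc a b, ψ x = ψ a := by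
  refine constant_of_has_deriv_right_zero hψ.continuous.continuousOn fun x hx => ?_
  have hx' := eqOn_zero_of_integral_sq_nonpos (hψ.continuous_deriv le_rfl).continuousOn hab h x
    (Ico_subset_Icc_self hx)
  simpa only [hx'] using ((hψ.differentiable one_ne_zero x).hasDerivAt).hasDerivWithinAt

/-- All eigenvalues `κ²` of the eigenvalue problem
`ψ'' = -κ²ψ` on the four quarter-intervals of `(0, 2π)` with the stated transmission
conditions (piecewise constant weight `ε₁ = ε₂ = ε₃ ≠ ε₄`, all positive) are
strictly positive. -/
theorem stmt_7 (e1 e4 : ℝ) (he1 : 0 < e1) (he4 : 0 < e4) (hne : e1 ≠ e4)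
    (κsq : ℝ) (ψ₁ ψ₂ ψ₃ ψ₄ : ℝ → ℝ)
    (hs1 : ContDiff ℝ 2 ψ₁) (hs2 : ContDiff ℝ 2 ψ₂)
    (hs3 : ContDiff ℝ 2 ψ₃) (hs4 : ContDiff ℝ 2 ψ₄)
    (hode1 : ∀ x ∈ Set.Icc (0 : ℝ) (Real.pi/2), deriv (deriv ψ₁) x = -κsq * ψ₁ x)
    (hode2 : ∀ x ∈ Set.Icc (Real.pi/2) Real.pi, deriv (deriv ψ₂) x = -κsq * ψ₂ x)
    (hode3 : ∀ x ∈ Set.Icc Real.pi (3*Real.pi/2), deriv (deriv ψ₃) x = -κsq * ψ₃ x)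
    (hode4 : ∀ x ∈ Set.Icc (3*Real.pi/2) (2*Real.pi), deriv (deriv ψ₄) x = -κsq * ψ₄ x)
    (htr1 : e1 * ψ₁ 0 = e4 * ψ₄ (2*Real.pi))
    (htr2 : deriv ψ₁ 0 = deriv ψ₄ (2*Real.pi))
    (htr3 : ψ₁ (Real.pi/2) = ψ₂ (Real.pi/2))
    (htr4 : deriv ψ₁ (Real.pi/2) = deriv ψ₂ (Real.pi/2))
    (htr5 : ψ₂ Real.pi = ψ₃ Real.pi)
    (htr6 : deriv ψ₂ Real.pi = deriv ψ₃ Real.pi)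
    (htr7 : ψ₃ (3*Real.pi/2) = ψ₄ (3*Real.pi/2))
    (htr8 : e1 * deriv ψ₃ (3*Real.pi/2) = e4 * deriv ψ₄ (3*Real.pi/2))
    (hnt : ¬ ((∀ x ∈ Set.Icc (0 : ℝ) (Real.pi/2), ψ₁ x = 0) ∧
              (∀ x ∈ Set.Icc (Real.pi/2) Real.pi, ψ₂ x = 0) ∧
              (∀ x ∈ Set.Icc Real.pi (3*Real.pi/2), ψ₃ x = 0) ∧
              (∀ x ∈ Set.Icc (3*Real.pi/2) (2*Real.pi), ψ₄ x = 0))) :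
    0 < κsq := by
  by_contra! hκ
  obtain ⟨h1, h2, h3, h4⟩ : 0 < π / 2 ∧ π / 2 < π ∧ π < 3 * π / 2 ∧ 3 * π / 2 < 2 * π := by
    refine ⟨?_, ?_, ?_, ?_⟩ <;> linarith [pi_pos]
  have fluxes : e1 * boundaryFlux ψ₁ 0 (π / 2) + e1 * boundaryFlux ψ₂ (π / 2) π
      + e1 * boundaryFlux ψ₃ π (3 * π / 2) + e4 * boundaryFlux ψ₄ (3 * π / 2) (2 * π) = 0 := by
    unfold boundaryFlux
    linear_combination (e1 * deriv ψ₂ (π / 2)) * htr3 + (e1 * ψ₁ (π / 2)) * htr4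
      + (e1 * deriv ψ₃ π) * htr5 + (e1 * ψ₂ π) * htr6 + (e4 * deriv ψ₄ (3 * π / 2)) * htr7
      + ψ₃ (3 * π / 2) * htr8 - deriv ψ₁ 0 * htr1 - (e4 * ψ₄ (2 * π)) * htr2
  have energy₁ := integral_deriv_sq_le_boundaryFlux hs1 h1.le hκ hode1
  have energy₂ := integral_deriv_sq_le_boundaryFlux hs2 h2.le hκ hode2
  have energy₃ := integral_deriv_sq_le_boundaryFlux hs3 h3.le hκ hode3
  have energy₄ := integral_deriv_sq_le_boundaryFlux hs4 h4.le hκ hode4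
  have nonneg₁ : 0 ≤ ∫ x in 0..π / 2, deriv ψ₁ x ^ 2 := integral_nonneg h1.le fun _ _ => sq_nonneg _
  have nonneg₂ : 0 ≤ ∫ x in π / 2..π, deriv ψ₂ x ^ 2 := integral_nonneg h2.le fun _ _ => sq_nonneg _
  have nonneg₃ : 0 ≤ ∫ x in π..3 * π / 2, deriv ψ₃ x ^ 2 :=
    integral_nonneg h3.le fun _ _ => sq_nonneg _
  have nonneg₄ : 0 ≤ ∫ x in 3 * π / 2..2 * π, deriv ψ₄ x ^ 2 :=
    integral_nonneg h4.le fun _ _ => sq_nonneg _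
  have const₁ := eq_left_of_integral_deriv_sq_nonpos hs1.of_succ h1 (by nlinarith)
  have const₂ := eq_left_of_integral_deriv_sq_nonpos hs2.of_succ h2 (by nlinarith)
  have const₃ := eq_left_of_integral_deriv_sq_nonpos hs3.of_succ h3 (by nlinarith)
  have const₄ := eq_left_of_integral_deriv_sq_nonpos hs4.of_succ h4 (by nlinarith)
  have eq₂ : ∀ x ∈ Icc (π / 2) π, ψ₂ x = ψ₁ 0 := fun x hx =>
    (const₂ x hx).trans (htr3.symm.trans (const₁ _ (right_mem_Icc.2 h1.le)))
  have eq₃ : ∀ x ∈ Icc π (3 * π / 2), ψ₃ x = ψ₁ 0 := fun x hx =>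
    (const₃ x hx).trans (htr5.symm.trans (eq₂ _ (right_mem_Icc.2 h2.le)))
  have eq₄ : ∀ x ∈ Icc (3 * π / 2) (2 * π), ψ₄ x = ψ₁ 0 := fun x hx =>
    (const₄ x hx).trans (htr7.symm.trans (eq₃ _ (right_mem_Icc.2 h3.le)))
  have hc : ψ₁ 0 = 0 := by
    rw [eq₄ _ (right_mem_Icc.2 h4.le)] at htr1
    by_contra hc
    exact hne (mul_right_cancel₀ hc htr1)
  exact hnt ⟨fun x hx => (const₁ x hx).trans hc, fun x hx => (eq₂ x hx).trans hc,
    fun x hx => (eq₃ x hx).trans hc, fun x hx => (eq₄ x hx).trans hc⟩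
end

section
/- Let A be a skew-adjoint operator on a Hilbert space X, τ > 0, and v ∈ D(A²). Then ‖A(I - (τ/2)A)(I - (τ²/4)A²)^{-1} (I-A²)^{-1/4+θ} v‖² = ⟨(I-A²)^{-1/2+2θ} v, -A²(I - (τ²/4)A²)^{-1} v⟩ for any θ ∈ (0,1/4), and this quantity is bounded by ‖(I-A²)^{1/4+θ}(I - (τ²/4)A²)^{-1/2} v‖². -/
/-!
Everything is a function of the self-adjoint operator `T = A * A`, whose spectrum lies in
`(-∞, 0]` because `-T = A† A ≥ 0`. Through the continuous functional calculus, `I - A²` and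
`I - (τ²/4) A²` become the symbols `1 - s` and `1 - c s` (`c = τ²/4`), both positive on the
spectrum, and skew-adjointness gives `(A (I - (τ/2) A))† (A (I - (τ/2) A)) = c T² - T`.
So all three quantities are quadratic forms `re ⟪v, f(T) v⟫`: the two sides of the identity have
the same symbol `-s (1 - s)^(2θ - 1/2) (1 - c s)⁻¹`, and the bound follows from `-s ≤ 1 - s`
by monotonicity of the functional calculus.
-/

open ContinuousLinearMap

section FunctionalCalculus

variable {X : Type*} [NormedAddCommGroup X] [InnerProductSpace ℂ X] [CompleteSpace X]

lemma cfc_apply_cfc_apply {a : X →L[ℂ] X} {f g : ℝ → ℝ}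
    (hf : ContinuousOn f (spectrum ℝ a)) (hg : ContinuousOn g (spectrum ℝ a)) (x : X) :
    cfc f a (cfc g a x) = cfc (fun s => f s * g s) a x := by
  rw [cfc_mul f g a hf hg]
  rfl

lemma inner_cfc_apply_left (f : ℝ → ℝ) (a : X →L[ℂ] X) (x y : X) :
    inner ℂ (cfc f a x) y = inner ℂ x (cfc f a y) :=
  (cfc_predicate f a).isSymmetric x y

lemma inner_cfc_apply_cfc_apply {a : X →L[ℂ] X} {f g h : ℝ → ℝ}
    (hf : ContinuousOn f (spectrum ℝ a)) (hg : ContinuousOn g (spectrum ℝ a))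
    (hfg : (spectrum ℝ a).EqOn h (f * g)) (x y : X) :
    inner ℂ (cfc f a x) (cfc g a y) = inner ℂ x (cfc h a y) := by
  rw [inner_cfc_apply_left, cfc_apply_cfc_apply hf hg, cfc_congr hfg]
  rfl

lemma norm_cfc_apply_sq {a : X →L[ℂ] X} {f : ℝ → ℝ} (hf : ContinuousOn f (spectrum ℝ a))
    (x : X) : ‖cfc f a x‖ ^ 2 = (inner ℂ x (cfc (fun s => f s * f s) a x)).re := by
  rw [InnerProductSpace.norm_sq_eq_re_inner (𝕜 := ℂ),
    inner_cfc_apply_cfc_apply hf hf fun _ _ => rfl]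
  rfl

lemma re_inner_cfc_le_of_le {a : X →L[ℂ] X} {f g : ℝ → ℝ}
    (hf : ContinuousOn f (spectrum ℝ a)) (hg : ContinuousOn g (spectrum ℝ a))
    (hfg : ∀ s ∈ spectrum ℝ a, f s ≤ g s) (x : X) :
    (inner ℂ x (cfc f a x)).re ≤ (inner ℂ x (cfc g a x)).re := by
  have := ((le_def _ _).mp (cfc_mono hfg hf hg)).re_inner_nonneg_right x
  rwa [sub_apply, inner_sub_right, map_sub, sub_nonneg] at this

lemma cfc_comp_of_pos {a : X →L[ℂ] X} (ha : IsSelfAdjoint a) {φ : ℝ → ℝ} (hφ : Continuous φ)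
    (hpos : ∀ s ∈ spectrum ℝ a, 0 < φ s) {g : ℝ → ℝ} (hg : ContinuousOn g (Set.Ioi 0)) :
    cfc g (cfc φ a) = cfc (fun s => g (φ s)) a :=
  (cfc_comp' g φ a (hg.mono (Set.image_subset_iff.mpr hpos)) hφ.continuousOn ha).symm

lemma one_sub_smul_eq_cfc {a : X →L[ℂ] X} (ha : IsSelfAdjoint a) (c : ℝ) :
    1 - (c : ℂ) • a = cfc (fun s : ℝ => 1 - c * s) a := by
  rw [cfc_sub _ _ a, cfc_const_one ℝ a, cfc_const_mul_id c a, Complex.coe_smul]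

lemma one_sub_eq_cfc {a : X →L[ℂ] X} (ha : IsSelfAdjoint a) :
    1 - a = cfc (fun s : ℝ => 1 - s) a := by
  rw [cfc_sub _ _ a, cfc_const_one ℝ a, cfc_id' ℝ a]

end FunctionalCalculus

section SkewAdjoint

variable {X : Type*} [NormedAddCommGroup X] [InnerProductSpace ℂ X] [CompleteSpace X]
  {A : X →L[ℂ] X}

lemma isSelfAdjoint_mul_self_of_adjoint_eq_neg (hA : adjoint A = -A) :
    IsSelfAdjoint (A * A) := by
  rw [IsSelfAdjoint, star_mul, star_eq_adjoint, hA, neg_mul_neg]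

lemma spectrum_mul_self_subset_Iic_of_adjoint_eq_neg (hA : adjoint A = -A) :
    spectrum ℝ (A * A) ⊆ Set.Iic 0 := by
  have hnonneg : 0 ≤ -(A * A) := by
    simpa [star_eq_adjoint, hA] using star_mul_self_nonneg A
  intro s hs
  have : -s ∈ spectrum ℝ (-(A * A)) := by
    rw [← spectrum.neg_eq]
    exact Set.neg_mem_neg.mpr hs
  simpa using spectrum_nonneg_of_nonneg hnonneg this

lemma one_sub_mul_pos_of_mem_spectrum (hA : adjoint A = -A) {c s : ℝ} (hc : 0 ≤ c)
    (hs : s ∈ spectrum ℝ (A * A)) : 0 < 1 - c * s := by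
  nlinarith [Set.mem_Iic.mp (spectrum_mul_self_subset_Iic_of_adjoint_eq_neg hA hs)]

lemma adjoint_mul_one_sub_smul_mul_self_eq_cfc (hA : adjoint A = -A) (t : ℝ) :
    adjoint (A * (1 - (t : ℂ) • A)) * (A * (1 - (t : ℂ) • A))
      = cfc (fun s : ℝ => t ^ 2 * s ^ 2 - s) (A * A) := by
  have hT := isSelfAdjoint_mul_self_of_adjoint_eq_neg hA
  rw [cfc_sub _ _ (A * A), cfc_const_mul _ _ (A * A), cfc_pow_id (A * A) 2, cfc_id' ℝ (A * A)]
  rw [← star_eq_adjoint] at hA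
  simp only [← star_eq_adjoint, star_mul, star_sub, star_one, star_smul, hA, star_trivial,
    Complex.coe_smul, smul_neg, sub_neg_eq_add]
  simp only [add_mul, mul_sub, smul_mul_assoc, mul_smul_comm, one_mul, mul_one, neg_mul, mul_neg,
    sq, mul_assoc]
  module

lemma norm_sq_apply_one_sub_smul_apply (hA : adjoint A = -A) (t : ℝ) (w : X) :
    ‖A ((1 - (t : ℂ) • A) w)‖ ^ 2
      = (inner ℂ w (cfc (fun s : ℝ => t ^ 2 * s ^ 2 - s) (A * A) w)).re := by
  rw [← adjoint_mul_one_sub_smul_mul_self_eq_cfc hA]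
  exact apply_norm_sq_eq_inner_adjoint_right (A * (1 - (t : ℂ) • A)) w

lemma neg_apply_apply_cfc (hA : adjoint A = -A) {f : ℝ → ℝ}
    (hf : ContinuousOn f (spectrum ℝ (A * A))) (x : X) :
    -(A (A (cfc f (A * A) x))) = cfc (fun s => -(s * f s)) (A * A) x := by
  have hT := isSelfAdjoint_mul_self_of_adjoint_eq_neg hA
  rw [cfc_neg, cfc_mul _ _ (A * A) (by fun_prop) hf, cfc_id' ℝ (A * A)]
  rfl

end SkewAdjoint

lemma neg_mul_rpow_mul_inv_eq {c s a b : ℝ} (hab : a + a = b) (hs : 0 < 1 - s)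
    (hcs : 1 - c * s ≠ 0) :
    -(s * ((1 - s) ^ b * (1 - c * s)⁻¹))
      = (1 - c * s)⁻¹ * (1 - s) ^ a * ((c * s ^ 2 - s) * ((1 - c * s)⁻¹ * (1 - s) ^ a)) := by
  rw [← hab, Real.rpow_add hs, show c * s ^ 2 - s = -s * (1 - c * s) by ring]
  generalize 1 - c * s = y at hcs ⊢
  field_simp

lemma neg_mul_rpow_mul_inv_le {c s a b : ℝ} (hab : a + a = 1 + b) (hs : 0 < 1 - s)
    (hcs : 0 < 1 - c * s) :
    -(s * ((1 - s) ^ b * (1 - c * s)⁻¹))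
      ≤ (1 - s) ^ a * (1 - c * s) ^ (-(1 / 2) : ℝ)
        * ((1 - s) ^ a * (1 - c * s) ^ (-(1 / 2) : ℝ)) := by
  have hsq : (1 - c * s) ^ (-(1 / 2) : ℝ) * (1 - c * s) ^ (-(1 / 2) : ℝ) = (1 - c * s)⁻¹ := by
    rw [← Real.rpow_add hcs, ← Real.rpow_neg_one]
    norm_num
  calc -(s * ((1 - s) ^ b * (1 - c * s)⁻¹)) ≤ (1 - s) * ((1 - s) ^ b * (1 - c * s)⁻¹) := by
        rw [neg_mul_eq_neg_mul]
        gcongr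
        linarith
    _ = _ := by
        rw [mul_mul_mul_comm, ← Real.rpow_add hs, hab, Real.rpow_add hs, Real.rpow_one, hsq,
          mul_assoc]

theorem stmt_14_general {X : Type*} [NormedAddCommGroup X] [InnerProductSpace ℂ X] [CompleteSpace X]
    (A : X →L[ℂ] X) (hA : ContinuousLinearMap.adjoint A = -A)
    (τ θ : ℝ) (v : X) :
    ‖A ((1 - ((τ/2 : ℝ) : ℂ) • A)
        ((cfc (fun s : ℝ => s⁻¹) (1 - ((τ ^ 2 / 4 : ℝ) : ℂ) • (A * A)))
          ((cfc (fun s : ℝ => s ^ (-(1/4) + θ : ℝ)) (1 - A * A)) v)))‖ ^ 2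
      = ((inner ℂ ((cfc (fun s : ℝ => s ^ (-(1/2) + 2*θ : ℝ)) (1 - A * A)) v)
            (-(A (A ((cfc (fun s : ℝ => s⁻¹)
              (1 - ((τ ^ 2 / 4 : ℝ) : ℂ) • (A * A))) v)))) : ℂ)).re
    ∧ ‖A ((1 - ((τ/2 : ℝ) : ℂ) • A)
        ((cfc (fun s : ℝ => s⁻¹) (1 - ((τ ^ 2 / 4 : ℝ) : ℂ) • (A * A)))
          ((cfc (fun s : ℝ => s ^ (-(1/4) + θ : ℝ)) (1 - A * A)) v)))‖ ^ 2
      ≤ ‖(cfc (fun s : ℝ => s ^ ((1/4) + θ : ℝ)) (1 - A * A))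
          ((cfc (fun s : ℝ => s ^ (-(1/2) : ℝ))
            (1 - ((τ ^ 2 / 4 : ℝ) : ℂ) • (A * A))) v)‖ ^ 2 := by
  have hT := isSelfAdjoint_mul_self_of_adjoint_eq_neg hA
  have hQ (s : ℝ) (hs : s ∈ spectrum ℝ (A * A)) : 0 < 1 - τ ^ 2 / 4 * s :=
    one_sub_mul_pos_of_mem_spectrum hA (by positivity) hs
  have hP (s : ℝ) (hs : s ∈ spectrum ℝ (A * A)) : 0 < 1 - s := by
    simpa using one_sub_mul_pos_of_mem_spectrum hA zero_le_one hs
  have hinv : ContinuousOn (fun x : ℝ => x⁻¹) (Set.Ioi 0) :=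
    continuousOn_inv₀.mono fun x hx => (Set.mem_Ioi.mp hx).ne'
  have hrpow (p : ℝ) : ContinuousOn (fun x : ℝ => x ^ p) (Set.Ioi 0) :=
    continuousOn_id.rpow_const fun x hx => Or.inl (Set.mem_Ioi.mp hx).ne'
  have hcQinv : ContinuousOn (fun s : ℝ => (1 - τ ^ 2 / 4 * s)⁻¹) (spectrum ℝ (A * A)) :=
    hinv.comp (by fun_prop) hQ
  have hcQ (p : ℝ) : ContinuousOn (fun s : ℝ => (1 - τ ^ 2 / 4 * s) ^ p) (spectrum ℝ (A * A)) :=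
    (hrpow p).comp (by fun_prop) hQ
  have hcP (p : ℝ) : ContinuousOn (fun s : ℝ => (1 - s) ^ p) (spectrum ℝ (A * A)) :=
    (hrpow p).comp (by fun_prop) hP
  rw [one_sub_smul_eq_cfc hT, one_sub_eq_cfc hT]
  simp only [cfc_comp_of_pos hT (by fun_prop) hQ hinv,
    cfc_comp_of_pos hT (by fun_prop) hQ (hrpow _), cfc_comp_of_pos hT (by fun_prop) hP (hrpow _)]
  have hk := hcQinv.fun_mul (hcP (-(1/4) + θ))
  have hm : ContinuousOn (fun s : ℝ => τ ^ 2 / 4 * s ^ 2 - s) (spectrum ℝ (A * A)) := by fun_prop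
  have hh := (hcP (1/4 + θ)).fun_mul (hcQ (-(1/2)))
  have hN := ((continuousOn_id' _).fun_mul hcQinv).fun_neg
  have hG := ((continuousOn_id' _).fun_mul ((hcP (-(1/2) + 2*θ)).fun_mul hcQinv)).fun_neg
  rw [cfc_apply_cfc_apply hcQinv (hcP _), cfc_apply_cfc_apply (hcP _) (hcQ _),
    norm_sq_apply_one_sub_smul_apply hA, show (τ / 2) ^ 2 = τ ^ 2 / 4 by ring,
    neg_apply_apply_cfc hA hcQinv, cfc_apply_cfc_apply hm hk,
    inner_cfc_apply_cfc_apply hk (hm.fun_mul hk)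
      fun s hs => neg_mul_rpow_mul_inv_eq (b := -(1/2) + 2*θ) (by ring) (hP s hs) (hQ s hs).ne',
    norm_cfc_apply_sq hh]
  constructor
  · exact (congrArg Complex.re (inner_cfc_apply_cfc_apply (hcP _) hN
      (fun s _ => by simp only [Pi.mul_apply]; ring) v v)).symm
  · exact re_inner_cfc_le_of_le hG (hh.fun_mul hh)
      (fun s hs => neg_mul_rpow_mul_inv_le (by ring) (hP s hs) (hQ s hs)) v

/-- For a skew-adjoint operator `A` on a Hilbert space `X`, `τ > 0`,
`θ ∈ (0,1/4)` and `v ∈ D(A²)`: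
`‖A(I-(τ/2)A)(I-(τ²/4)A²)⁻¹(I-A²)^{-1/4+θ} v‖² = ⟨(I-A²)^{-1/2+2θ} v, -A²(I-(τ²/4)A²)⁻¹ v⟩`,
and this quantity is bounded by `‖(I-A²)^{1/4+θ}(I-(τ²/4)A²)^{-1/2} v‖²`.
Fractional powers of the positive self-adjoint operators `P = I - A²` and
`Q = I - (τ²/4)A²` are expressed via the continuous functional calculus. -/
theorem stmt_14 {X : Type*} [NormedAddCommGroup X] [InnerProductSpace ℂ X] [CompleteSpace X]
    (A : X →L[ℂ] X) (hA : ContinuousLinearMap.adjoint A = -A)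
    (τ θ : ℝ) (hτ : 0 < τ) (hθ : θ ∈ Set.Ioo (0 : ℝ) (1/4)) (v : X) :
    ‖A ((1 - ((τ/2 : ℝ) : ℂ) • A)
        ((cfc (fun s : ℝ => s⁻¹) (1 - ((τ ^ 2 / 4 : ℝ) : ℂ) • (A * A)))
          ((cfc (fun s : ℝ => s ^ (-(1/4) + θ : ℝ)) (1 - A * A)) v)))‖ ^ 2
      = ((inner ℂ ((cfc (fun s : ℝ => s ^ (-(1/2) + 2*θ : ℝ)) (1 - A * A)) v)
            (-(A (A ((cfc (fun s : ℝ => s⁻¹)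
              (1 - ((τ ^ 2 / 4 : ℝ) : ℂ) • (A * A))) v)))) : ℂ)).re
    ∧ ‖A ((1 - ((τ/2 : ℝ) : ℂ) • A)
        ((cfc (fun s : ℝ => s⁻¹) (1 - ((τ ^ 2 / 4 : ℝ) : ℂ) • (A * A)))
          ((cfc (fun s : ℝ => s ^ (-(1/4) + θ : ℝ)) (1 - A * A)) v)))‖ ^ 2
      ≤ ‖(cfc (fun s : ℝ => s ^ ((1/4) + θ : ℝ)) (1 - A * A))
          ((cfc (fun s : ℝ => s ^ (-(1/2) : ℝ))
            (1 - ((τ ^ 2 / 4 : ℝ) : ℂ) • (A * A))) v)‖ ^ 2 :=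
  stmt_14_general A hA τ θ v
end
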